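/- arXiv:2410.18545 — 5 statements merged into one kernel-verified Lean document; each statement's English description precedes it below -/
import Mathlib

section
/- Let L ≥ 1 and α > 0. Then [π²α/(L(π² + 4αL))] · (L³/3 + L²/α)^{2/3} ≥ π²α/(9^{1/3}(π² + 4α)). -/
open Real

theorem stmt_10 (L α : ℝ) (hL : 1 ≤ L) (hα : 0 < α) :
    π ^ 2 * α / ((9 : ℝ) ^ ((1 : ℝ) / 3) * (π ^ 2 + 4 * α)) ≤
      π ^ 2 * α / (L * (π ^ 2 + 4 * α * L)) *
        (L ^ 3 / 3 + L ^ 2 / α) ^ ((2 : ℝ) / 3) := by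
  have hL0 : (0:ℝ) < L := lt_of_lt_of_le one_pos hL
  have hπ : (0:ℝ) < π := pi_pos
  have hc : (0:ℝ) < (9 : ℝ) ^ ((1 : ℝ) / 3) := rpow_pos_of_pos (by norm_num) _
  -- (L^3/3)^(2/3) = L^2 / 9^(1/3)
  have h2 : (L ^ 3 / 3 : ℝ) ^ ((2:ℝ)/3) = L ^ 2 / (9 : ℝ) ^ ((1 : ℝ) / 3) := by
    rw [div_rpow (by positivity) (by norm_num)]
    congr 1
    · rw [← rpow_natCast L 3, ← rpow_mul hL0.le, ← rpow_natCast L 2]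
      norm_num
    · rw [show (9:ℝ) = 3 ^ (2:ℝ) by
        rw [show (2:ℝ) = ((2:ℕ):ℝ) by norm_num, rpow_natCast]; norm_num,
        ← rpow_mul (by norm_num)]
      norm_num
  have h1 : (L ^ 3 / 3 : ℝ) ^ ((2:ℝ)/3) ≤ (L ^ 3 / 3 + L ^ 2 / α) ^ ((2:ℝ)/3) := by
    apply rpow_le_rpow (by positivity) (le_add_of_nonneg_right (by positivity)) (by norm_num)
  have hbase : π ^ 2 * α / ((9 : ℝ) ^ ((1 : ℝ) / 3) * (π ^ 2 + 4 * α)) ≤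
      π ^ 2 * α / (L * (π ^ 2 + 4 * α * L)) * (L ^ 2 / (9 : ℝ) ^ ((1 : ℝ) / 3)) := by
    rw [div_mul_div_comm, div_le_div_iff₀ (by positivity) (by positivity)]
    nlinarith [sq_nonneg π, mul_pos hπ hπ, mul_pos hα hL0, sq_nonneg (L-1),
      mul_nonneg (mul_nonneg (sq_nonneg π) hα.le) (mul_nonneg hc.le
        (mul_nonneg (sq_nonneg π) (sub_nonneg.2 hL)))]
  calc π ^ 2 * α / ((9 : ℝ) ^ ((1 : ℝ) / 3) * (π ^ 2 + 4 * α))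
      ≤ π ^ 2 * α / (L * (π ^ 2 + 4 * α * L)) * (L ^ 2 / (9 : ℝ) ^ ((1 : ℝ) / 3)) := hbase
    _ ≤ π ^ 2 * α / (L * (π ^ 2 + 4 * α * L)) * (L ^ 3 / 3 + L ^ 2 / α) ^ ((2:ℝ)/3) := by
        rw [← h2]
        exact mul_le_mul_of_nonneg_left h1 (by positivity)
end

section
/- Let υ solve −υ'' = 1 on (0,1) with υ'(0) = 0 and υ'(1) + 2υ(1) = 0. Then υ(x) = −x²/2 + 1 and ∫₀¹ υ dx = 5/6. Let w solve −w'' = 1 on (0,1) with −w'(0) + w(0) = 0 and w'(1) + w(1) = 0. Then w(x) = −x²/2 + x/2 + 1/2 and ∫₀¹ w dx = 7/12. In particular ∫₀¹ w dx < ∫₀¹ υ dx. -/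
open Set

lemma aux_const (g : ℝ → ℝ) (hg : ∀ x ∈ Icc (0 : ℝ) 1, HasDerivAt g 0 x) :
    ∀ x ∈ Icc (0 : ℝ) 1, g x = g 0 := by
  apply constant_of_has_deriv_right_zero
  · exact fun x hx => (hg x hx).continuousAt.continuousWithinAt
  · exact fun x hx => (hg x (Ico_subset_Icc_self hx)).hasDerivWithinAt

lemma aux_sol (f f' : ℝ → ℝ)
    (hd : ∀ x ∈ Icc (0 : ℝ) 1, HasDerivAt f (f' x) x)
    (hd2 : ∀ x ∈ Icc (0 : ℝ) 1, HasDerivAt f' (-1) x) :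
    ∀ x ∈ Icc (0 : ℝ) 1, f x = -x ^ 2 / 2 + f' 0 * x + f 0 := by
  have h1 : ∀ x ∈ Icc (0 : ℝ) 1, f' x + x = f' 0 + 0 := by
    apply aux_const (fun x => f' x + x)
    intro x hx
    have h : HasDerivAt (fun x => f' x + x) (-1 + 1) x := (hd2 x hx).add (hasDerivAt_id x)
    rw [neg_add_cancel] at h; exact h
  have h1' : ∀ x ∈ Icc (0 : ℝ) 1, f' x = -x + f' 0 := by
    intro x hx; have := h1 x hx; linarith
  have h2 : ∀ x ∈ Icc (0 : ℝ) 1, f x + x ^ 2 / 2 - f' 0 * x = f 0 + 0 ^ 2 / 2 - f' 0 * 0 := by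
    apply aux_const (fun x => f x + x ^ 2 / 2 - f' 0 * x)
    intro x hx
    have h3 : HasDerivAt (fun x => f x + x ^ 2 / 2 - f' 0 * x)
        (f' x + ((2 : ℕ) : ℝ) * x ^ (2 - 1) / 2 - f' 0 * 1) x := (((hd x hx).add (((hasDerivAt_pow 2 x).div_const 2))).sub
        ((hasDerivAt_id x).const_mul (f' 0)))
    have hx' := h1' x hx
    convert h3 using 1
    simp [hx']
  intro x hx
  have := h2 x hx; linarith

theorem stmt_11 (υ υ' w w' : ℝ → ℝ)
    (hυd : ∀ x ∈ Icc (0 : ℝ) 1, HasDerivAt υ (υ' x) x)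
    (hυd2 : ∀ x ∈ Icc (0 : ℝ) 1, HasDerivAt υ' (-1) x)
    (hυbc0 : υ' 0 = 0)
    (hυbc1 : υ' 1 + 2 * υ 1 = 0)
    (hwd : ∀ x ∈ Icc (0 : ℝ) 1, HasDerivAt w (w' x) x)
    (hwd2 : ∀ x ∈ Icc (0 : ℝ) 1, HasDerivAt w' (-1) x)
    (hwbc0 : -w' 0 + w 0 = 0)
    (hwbc1 : w' 1 + w 1 = 0) :
    (∀ x ∈ Icc (0 : ℝ) 1, υ x = -x ^ 2 / 2 + 1) ∧
    (∫ x in (0 : ℝ)..1, υ x) = 5 / 6 ∧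
    (∀ x ∈ Icc (0 : ℝ) 1, w x = -x ^ 2 / 2 + x / 2 + 1 / 2) ∧
    (∫ x in (0 : ℝ)..1, w x) = 7 / 12 ∧
    (∫ x in (0 : ℝ)..1, w x) < ∫ x in (0 : ℝ)..1, υ x := by
  have one_mem : (1 : ℝ) ∈ Icc (0 : ℝ) 1 := by norm_num
  have hυ := aux_sol υ υ' hυd hυd2
  have hw := aux_sol w w' hwd hwd2
  -- derivative formula at 1
  have hυ'1 : υ' 1 = -1 + υ' 0 := by
    have h1 : ∀ x ∈ Icc (0 : ℝ) 1, υ' x + x = υ' 0 + 0 := by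
      apply aux_const (fun x => υ' x + x)
      intro x hx; have h : HasDerivAt (fun x => υ' x + x) (-1 + 1) x := (hυd2 x hx).add (hasDerivAt_id x)
      rw [neg_add_cancel] at h; exact h
    have := h1 1 one_mem; linarith
  have hw'1 : w' 1 = -1 + w' 0 := by
    have h1 : ∀ x ∈ Icc (0 : ℝ) 1, w' x + x = w' 0 + 0 := by
      apply aux_const (fun x => w' x + x)
      intro x hx; have h : HasDerivAt (fun x => w' x + x) (-1 + 1) x := (hwd2 x hx).add (hasDerivAt_id x)
      rw [neg_add_cancel] at h; exact h
    have := h1 1 one_mem; linarith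
  have hυ1 := hυ 1 one_mem
  have hw1 := hw 1 one_mem
  have hυ0 : υ 0 = 1 := by
    rw [hυbc0] at hυ1 hυ'1; norm_num at hυ1; linarith [hυbc1]
  have hw'0 : w' 0 = 1 / 2 := by nlinarith [hwbc0, hwbc1, hw'1, hw1]
  have hw0 : w 0 = 1 / 2 := by nlinarith [hwbc0]
  have hυform : ∀ x ∈ Icc (0 : ℝ) 1, υ x = -x ^ 2 / 2 + 1 := by
    intro x hx; rw [hυ x hx, hυbc0, hυ0]; ring
  have hwform : ∀ x ∈ Icc (0 : ℝ) 1, w x = -x ^ 2 / 2 + x / 2 + 1 / 2 := by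
    intro x hx; rw [hw x hx, hw'0, hw0]; ring
  have hIυ : (∫ x in (0 : ℝ)..1, υ x) = 5 / 6 := by
    rw [intervalIntegral.integral_congr (g := fun x => -x ^ 2 / 2 + 1)
      (by rw [uIcc_of_le (by norm_num : (0:ℝ) ≤ 1)]; exact hυform)]
    have : (∫ x in (0 : ℝ)..1, (-x ^ 2 / 2 + 1)) =
        (∫ x in (0 : ℝ)..1, -x ^ 2 / 2) + ∫ x in (0 : ℝ)..1, (1 : ℝ) := by
      apply intervalIntegral.integral_add
      · exact (intervalIntegral.intervalIntegrable_pow 2).neg.div_const 2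
      · exact intervalIntegrable_const
    rw [this]
    simp [intervalIntegral.integral_div, intervalIntegral.integral_neg]
    norm_num [integral_pow]
  have hIw : (∫ x in (0 : ℝ)..1, w x) = 7 / 12 := by
    rw [intervalIntegral.integral_congr (g := fun x => -x ^ 2 / 2 + x / 2 + 1 / 2)
      (by rw [uIcc_of_le (by norm_num : (0:ℝ) ≤ 1)]; exact hwform)]
    have : (∫ x in (0 : ℝ)..1, (-x ^ 2 / 2 + x / 2 + 1 / 2)) =
        ((∫ x in (0 : ℝ)..1, -x ^ 2 / 2) + ∫ x in (0 : ℝ)..1, x / 2) +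
          ∫ x in (0 : ℝ)..1, (1 / 2 : ℝ) := by
      rw [intervalIntegral.integral_add, intervalIntegral.integral_add]
      · exact (intervalIntegral.intervalIntegrable_pow 2).neg.div_const 2
      · exact (intervalIntegral.intervalIntegrable_id).div_const 2
      · exact (((intervalIntegral.intervalIntegrable_pow 2).neg.div_const 2).add
          ((intervalIntegral.intervalIntegrable_id).div_const 2))
      · exact intervalIntegrable_const
    rw [this]
    simp [intervalIntegral.integral_div, intervalIntegral.integral_neg]
    norm_num [integral_pow, integral_id]
  exact ⟨hυform, hIυ, hwform, hIw, by rw [hIυ, hIw]; norm_num⟩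
end

section
/- Let a > 0 and α₀, α₁ ≥ 0 with α₀ + α₁ > 0, and let T(α₀, α₁) denote the torsional rigidity of the interval [0,a] with δ-conditions of strengths α₀, α₁ at the endpoints (the integral of the solution of −υ'' = 1, −υ'(0)+α₀υ(0)=0, υ'(a)+α₁υ(a)=0). Then T(α₀, α₁) ≤ T(0, α₀ + α₁) = a³/3 + a²/(α₀+α₁). -/
open Set

lemma aux_quad (a : ℝ) (ha : 0 < a) (f f' : ℝ → ℝ)
    (hd : ∀ x ∈ Icc 0 a, HasDerivAt f (f' x) x)
    (hd2 : ∀ x ∈ Icc 0 a, HasDerivAt f' (-1) x) :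
    (∀ x ∈ Icc (0:ℝ) a, f x = f 0 + f' 0 * x - x^2/2) ∧
    (∀ x ∈ Icc (0:ℝ) a, f' x = f' 0 - x) ∧
    (∫ x in (0:ℝ)..a, f x) = f 0 * a + f' 0 * a^2/2 - a^3/6 := by
  have h1 : ∀ x ∈ Icc (0:ℝ) a, f' x = f' 0 - x := by
    apply eq_of_has_deriv_right_eq (f' := fun _ => (-1 : ℝ))
    · exact fun x hx => (hd2 x (Ico_subset_Icc_self hx)).hasDerivWithinAt
    · intro x hx
      have : HasDerivAt (fun y : ℝ => f' 0 - y) (-1) x := by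
        simpa using (hasDerivAt_const x (f' 0)).fun_sub (hasDerivAt_id x)
      exact this.hasDerivWithinAt
    · exact fun x hx => (hd2 x hx).continuousAt.continuousWithinAt
    · fun_prop
    · simp
  have h2 : ∀ x ∈ Icc (0:ℝ) a, f x = f 0 + f' 0 * x - x^2/2 := by
    apply eq_of_has_deriv_right_eq (f' := f')
    · exact fun x hx => (hd x (Ico_subset_Icc_self hx)).hasDerivWithinAt
    · intro x hx
      have : HasDerivAt (fun y : ℝ => f 0 + f' 0 * y - y^2/2) (f' x) x := by
        have h := ((hasDerivAt_const x (f 0)).fun_add ((hasDerivAt_id x).const_mul (f' 0))).fun_sub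
          ((hasDerivAt_pow 2 x).div_const 2)
        convert h using 1
        case e'_4 => rfl
        case e'_5 => rfl
        case e'_8 => rfl
        rw [h1 x (Ico_subset_Icc_self hx)]; ring
      exact this.hasDerivWithinAt
    · exact fun x hx => (hd x hx).continuousAt.continuousWithinAt
    · fun_prop
    · simp
  refine ⟨h2, h1, ?_⟩
  have hcong : (∫ x in (0:ℝ)..a, f x) = ∫ x in (0:ℝ)..a, (f 0 + f' 0 * x - x^2/2) := by
    apply intervalIntegral.integral_congr
    intro x hx
    rw [uIcc_of_le ha.le] at hx
    exact h2 x hx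
  rw [hcong]
  have hcont : Continuous fun x : ℝ => f 0 + f' 0 * x - x^2/2 := by fun_prop
  rw [intervalIntegral.integral_eq_sub_of_hasDerivAt
    (f := fun x => f 0 * id x + f' 0 * (x^2/2) - x^3/6) (fun x _ => by
      have h := (((hasDerivAt_id x).const_mul (f 0)).fun_add
        (((hasDerivAt_pow 2 x).div_const 2).const_mul (f' 0))).fun_sub
        ((hasDerivAt_pow 3 x).div_const 6)
      convert h using 1
      norm_num; ring)
    (hcont.intervalIntegrable 0 a)]
  simp only [id_eq]
  ring

theorem stmt_15 (a α₀ α₁ : ℝ) (ha : 0 < a) (h₀ : 0 ≤ α₀) (h₁ : 0 ≤ α₁)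
    (hsum : 0 < α₀ + α₁) (υ υ' w w' : ℝ → ℝ)
    (hυd : ∀ x ∈ Icc 0 a, HasDerivAt υ (υ' x) x)
    (hυd2 : ∀ x ∈ Icc 0 a, HasDerivAt υ' (-1) x)
    (hυbc0 : -υ' 0 + α₀ * υ 0 = 0)
    (hυbc1 : υ' a + α₁ * υ a = 0)
    (hwd : ∀ x ∈ Icc 0 a, HasDerivAt w (w' x) x)
    (hwd2 : ∀ x ∈ Icc 0 a, HasDerivAt w' (-1) x)
    (hwbc0 : -w' 0 + 0 * w 0 = 0)
    (hwbc1 : w' a + (α₀ + α₁) * w a = 0) :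
    (∫ x in (0 : ℝ)..a, υ x) ≤ (∫ x in (0 : ℝ)..a, w x) ∧
    (∫ x in (0 : ℝ)..a, w x) = a ^ 3 / 3 + a ^ 2 / (α₀ + α₁) := by
  obtain ⟨hυv, hυ', hυint⟩ := aux_quad a ha υ υ' hυd hυd2
  obtain ⟨hwv, hw', hwint⟩ := aux_quad a ha w w' hwd hwd2
  have hmem : a ∈ Icc (0:ℝ) a := ⟨ha.le, le_refl a⟩
  -- w data
  have hw'0 : w' 0 = 0 := by linarith [hwbc0]
  have hwa : w a = w 0 - a^2/2 := by rw [hwv a hmem, hw'0]; ring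
  have hw'a : w' a = -a := by rw [hw' a hmem, hw'0]; ring
  have hw0 : w 0 = a / (α₀ + α₁) + a^2/2 := by
    rw [hwa, hw'a] at hwbc1
    field_simp at hwbc1 ⊢
    nlinarith [hwbc1]
  have hweq : (∫ x in (0 : ℝ)..a, w x) = a ^ 3 / 3 + a ^ 2 / (α₀ + α₁) := by
    rw [hwint, hw'0, hw0]
    field_simp
    ring
  refine ⟨?_, hweq⟩
  -- υ data
  have hυ'0 : υ' 0 = α₀ * υ 0 := by linarith [hυbc0]
  have hυa : υ a = υ 0 + α₀ * υ 0 * a - a^2/2 := by rw [hυv a hmem, hυ'0]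
  have hυ'a : υ' a = α₀ * υ 0 - a := by rw [hυ' a hmem, hυ'0]
  set c := υ 0 with hc
  have hconstraint : c * (α₀ + α₁ + α₀ * α₁ * a) = a + α₁ * a^2/2 := by
    rw [hυa, hυ'a] at hυbc1
    nlinarith [hυbc1]
  rw [hυint, hweq, hυ'0]
  rw [← sub_nonneg]
  have hD : 0 < α₀ + α₁ + α₀ * α₁ * a := by positivity
  have hcval : c = (a + α₁ * a^2/2) / (α₀ + α₁ + α₀ * α₁ * a) :=
    eq_div_of_mul_eq hD.ne' hconstraint
  rw [hcval]
  have hexpand : a ^ 3 / 3 + a ^ 2 / (α₀ + α₁) -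
      ((a + α₁ * a ^ 2 / 2) / (α₀ + α₁ + α₀ * α₁ * a) * a +
        α₀ * ((a + α₁ * a ^ 2 / 2) / (α₀ + α₁ + α₀ * α₁ * a)) * a ^ 2 / 2 -
        a ^ 3 / 6) =
      α₀ * α₁ * a ^ 3 * (4 + (α₀ + α₁) * a) /
        (4 * (α₀ + α₁) * (α₀ + α₁ + α₀ * α₁ * a)) := by
    field_simp
    ring
  rw [hexpand]
  positivity
end

section
/- Let υ ∈ H¹(0,L) be the solution of −υ'' = 1 with boundary conditions −υ'(0) + α·υ(0) = 0 and υ'(L) = 0, α > 0, and let λ₁ be the smallest eigenvalue of the corresponding operator −d²/dx² with these boundary conditions. Then λ₁ · ∫₀ᴸ υ dx < L. -/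
open Set

lemma poly_hasDeriv (c0 c1 c2 c3 c4 : ℝ) (x : ℝ) :
    HasDerivAt (fun x : ℝ => c0*x + c1*x^2/2 + c2*x^3/3 + c3*x^4/4 + c4*x^5/5)
      (c0 + c1*x + c2*x^2 + c3*x^3 + c4*x^4) x := by
  have h := (((((hasDerivAt_id x).const_mul c0).add
      (((hasDerivAt_pow 2 x).const_mul c1).div_const 2)).add
      (((hasDerivAt_pow 3 x).const_mul c2).div_const 3)).add
      (((hasDerivAt_pow 4 x).const_mul c3).div_const 4)).add
      (((hasDerivAt_pow 5 x).const_mul c4).div_const 5)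
  refine h.congr_deriv ?_
  push_cast; ring

lemma poly_int (c0 c1 c2 c3 c4 A B : ℝ) :
    ∫ x in A..B, (c0 + c1*x + c2*x^2 + c3*x^3 + c4*x^4)
      = (c0*B + c1*B^2/2 + c2*B^3/3 + c3*B^4/4 + c4*B^5/5)
        - (c0*A + c1*A^2/2 + c2*A^3/3 + c3*A^4/4 + c4*A^5/5) := by
  apply intervalIntegral.integral_eq_sub_of_hasDerivAt
  · intro x _; exact poly_hasDeriv c0 c1 c2 c3 c4 x
  · apply Continuous.intervalIntegrable; continuity

theorem stmt_17 (L α : ℝ) (hL : 0 < L) (hα : 0 < α) (υ υ' : ℝ → ℝ)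
    (hd : ∀ x ∈ Icc 0 L, HasDerivAt υ (υ' x) x)
    (hd2 : ∀ x ∈ Icc 0 L, HasDerivAt υ' (-1) x)
    (hbc0 : -υ' 0 + α * υ 0 = 0)
    (hbc1 : υ' L = 0)
    (lam : ℝ)
    (hlam : lam = sInf { r : ℝ | ∃ u : ℝ → ℝ,
        (∃ K : NNReal, LipschitzWith K u) ∧
        (0 < ∫ x in (0 : ℝ)..L, (u x) ^ 2) ∧
        r = ((∫ x in (0 : ℝ)..L, (deriv u x) ^ 2) + α * (u 0) ^ 2) /
            ∫ x in (0 : ℝ)..L, (u x) ^ 2 }) :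
    lam * (∫ x in (0 : ℝ)..L, υ x) < L := by
  set a : ℝ := L / α with ha
  have h0L : (0:ℝ) ∈ Icc (0:ℝ) L := ⟨le_refl 0, hL.le⟩
  have hLL : L ∈ Icc (0:ℝ) L := ⟨hL.le, le_refl L⟩
  -- Step 1: υ' x = L - x on Icc 0 L
  have hw : ∀ x ∈ Icc (0:ℝ) L, υ' x + x = υ' 0 + 0 := by
    apply constant_of_has_deriv_right_zero
    · intro x hx
      exact (((hd2 x hx).continuousAt).continuousWithinAt.add
        (continuous_id.continuousAt.continuousWithinAt))
    · intro x hx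
      have h := ((hd2 x (Ico_subset_Icc_self hx)).add (hasDerivAt_id x)).hasDerivWithinAt
        (s := Ici x)
      simp at h; exact h
  have hv'0 : υ' 0 = L := by
    have := hw L hLL
    rw [hbc1] at this; linarith
  have hv' : ∀ x ∈ Icc (0:ℝ) L, υ' x = L - x := by
    intro x hx
    have := hw x hx
    rw [hv'0] at this; linarith
  -- Step 2: υ x = a + L*x - x^2/2 on Icc 0 L
  have hv0 : υ 0 = a := by
    rw [hv'0] at hbc0
    rw [ha, eq_div_iff hα.ne']
    linarith
  have hpoly : ∀ x : ℝ, HasDerivAt (fun y : ℝ => a + L*y - y^2/2) (L - x) x := by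
    intro x
    have h := ((hasDerivAt_const x a).add ((hasDerivAt_id x).const_mul L)).sub
      ((hasDerivAt_pow 2 x).div_const 2)
    refine h.congr_deriv ?_
    push_cast; ring
  have hv : ∀ x ∈ Icc (0:ℝ) L, υ x = a + L*x - x^2/2 := by
    have hc : ∀ x ∈ Icc (0:ℝ) L, υ x - (a + L*x - x^2/2) = υ 0 - (a + L*0 - 0^2/2) := by
      apply constant_of_has_deriv_right_zero
      · intro x hx
        exact ((hd x hx).continuousAt.continuousWithinAt).sub
          ((hpoly x).continuousAt.continuousWithinAt)
      · intro x hx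
        have hx' := Ico_subset_Icc_self hx
        have h := ((hd x hx').sub (hpoly x)).hasDerivWithinAt (s := Ici x)
        rw [hv' x hx'] at h
        simp at h; exact h
    intro x hx
    have := hc x hx
    rw [hv0] at this
    nlinarith [this]
  -- Step 3: compute ∫ υ
  have hIv : (∫ x in (0:ℝ)..L, υ x) = a*L + L^3/3 := by
    rw [intervalIntegral.integral_congr (g := fun x => a + L*x + (-(1/2))*x^2 + 0*x^3 + 0*x^4)
      (by intro x hx
          rw [uIcc_of_le hL.le] at hx
          rw [hv x hx]; ring)]
    rw [poly_int]; ring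
  set I : ℝ := a*L + L^3/3 with hI
  have haP : 0 < a := div_pos hL hα
  have hIpos : 0 < I := by positivity
  -- test function
  set t : ℝ → ℝ := fun x => max (min x L) 0 with ht
  set u : ℝ → ℝ := fun x => a + L * t x - (t x)^2/2 with hu
  have htx : ∀ x ∈ Icc (0:ℝ) L, t x = x := by
    intro x hx
    simp only [ht]
    rw [min_eq_left hx.2, max_eq_left hx.1]
  have hub : ∀ x, 0 ≤ t x ∧ t x ≤ L := by
    intro x
    exact ⟨le_max_right _ _, max_le (min_le_right _ _) hL.le⟩
  -- Lipschitz
  have hlip : LipschitzWith ⟨L, hL.le⟩ u := by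
    apply LipschitzWith.of_dist_le_mul
    intro x y
    rw [Real.dist_eq, Real.dist_eq]
    have h1 : |t x - t y| ≤ |x - y| := by
      calc |t x - t y| ≤ |min x L - min y L| := abs_max_sub_max_le_abs _ _ _
        _ ≤ max |x - y| |L - L| := abs_min_sub_min_le_max _ _ _ _
        _ = |x - y| := by simp
    have hfac : u x - u y = (t x - t y) * (L - (t x + t y)/2) := by
      simp only [hu]; ring
    have hbx := hub x; have hby := hub y
    have h2 : |L - (t x + t y)/2| ≤ L := by
      rw [abs_le]; constructor <;> [linarith [hbx.2, hby.2]; linarith [hbx.1, hby.1]]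
    calc |u x - u y| = |t x - t y| * |L - (t x + t y)/2| := by rw [hfac, abs_mul]
      _ ≤ |x - y| * L := by
          apply mul_le_mul h1 h2 (abs_nonneg _) (abs_nonneg _)
      _ = ↑(⟨L, hL.le⟩ : NNReal) * |x - y| := by rw [mul_comm]
  -- u 0 = a
  have hu0 : u 0 = a := by
    simp only [hu]
    rw [htx 0 h0L]; ring
  -- ∫ u^2
  have hJ : (∫ x in (0:ℝ)..L, (u x)^2) = a^2*L + 2/3*a*L^3 + 2/15*L^5 := by
    rw [intervalIntegral.integral_congr
      (g := fun x => a^2 + (2*a*L)*x + (L^2 - a)*x^2 + (-L)*x^3 + (1/4)*x^4)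
      (by intro x hx
          rw [uIcc_of_le hL.le] at hx
          simp only [hu]
          rw [htx x hx]; ring)]
    rw [poly_int]; ring
  set J : ℝ := a^2*L + 2/3*a*L^3 + 2/15*L^5 with hJd
  have hJpos : 0 < J := by positivity
  -- ∫ (deriv u)^2 = L^3/3
  have hderivu : ∀ x ∈ Ioo (0:ℝ) L, deriv u x = L - x := by
    intro x hx
    have hev : u =ᶠ[nhds x] (fun y => a + L*y - y^2/2) := by
      filter_upwards [Ioo_mem_nhds hx.1 hx.2] with y hy
      simp only [hu]
      rw [htx y (Ioo_subset_Icc_self hy)]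
    rw [hev.deriv_eq]
    exact (hpoly x).deriv
  have hK : (∫ x in (0:ℝ)..L, (deriv u x)^2) = L^3/3 := by
    have : (∫ x in (0:ℝ)..L, (deriv u x)^2)
        = ∫ x in (0:ℝ)..L, (L^2 + (-(2*L))*x + 1*x^2 + 0*x^3 + 0*x^4) := by
      apply intervalIntegral.integral_congr_ae
      have hne : ∀ᵐ x : ℝ, x ≠ L := by
        rw [MeasureTheory.ae_iff]
        simpa using Real.volume_singleton
      filter_upwards [hne] with x hx hmem
      rw [uIoc_of_le hL.le] at hmem
      have hxo : x ∈ Ioo (0:ℝ) L := ⟨hmem.1, lt_of_le_of_ne hmem.2 hx⟩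
      rw [hderivu x hxo]; ring
    rw [this, poly_int]; ring
  -- membership in the set, bound lam
  set S := { r : ℝ | ∃ u : ℝ → ℝ,
        (∃ K : NNReal, LipschitzWith K u) ∧
        (0 < ∫ x in (0 : ℝ)..L, (u x) ^ 2) ∧
        r = ((∫ x in (0 : ℝ)..L, (deriv u x) ^ 2) + α * (u 0) ^ 2) /
            ∫ x in (0 : ℝ)..L, (u x) ^ 2 } with hS
  have hmem : (L^3/3 + α * a^2) / J ∈ S := by
    refine ⟨u, ⟨⟨L, hL.le⟩, hlip⟩, ?_, ?_⟩
    · rw [hJ]; exact hJpos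
    · rw [hK, hu0, hJ]
  have hbdd : BddBelow S := by
    refine ⟨0, ?_⟩
    rintro r ⟨f, _, hpos, hr⟩
    rw [hr]
    apply div_nonneg _ hpos.le
    have h1 : (0:ℝ) ≤ ∫ x in (0:ℝ)..L, (deriv f x)^2 :=
      intervalIntegral.integral_nonneg hL.le (fun x _ => sq_nonneg _)
    have h2 : (0:ℝ) ≤ α * (f 0)^2 := by positivity
    linarith
  have hlam_le : lam ≤ (L^3/3 + α * a^2) / J := by
    rw [hlam]; exact csInf_le hbdd hmem
  -- numerator equals I
  have hNI : L^3/3 + α * a^2 = I := by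
    have : α * a = L := by rw [ha]; field_simp
    simp only [hI]
    nlinarith [this]
  rw [hNI] at hlam_le
  -- final
  rw [hIv]
  have hfin : I / J * I < L := by
    rw [div_mul_eq_mul_div, div_lt_iff₀ hJpos]
    simp only [hI, hJd]
    nlinarith [sq_nonneg L, mul_pos haP hL, pow_pos hL 6]
  calc lam * I ≤ I / J * I := by
        apply mul_le_mul_of_nonneg_right hlam_le hIpos.le
    _ < L := hfin
end

section
/- Let a > 0 and for α₀, α₁ ≥ 0 not both zero, let T(α₀, α₁) be the torsional rigidity of [0,a] with δ-strengths α₀, α₁ at the endpoints. Then T is strictly decreasing in each variable: if α₀' > α₀ then T(α₀', α₁) < T(α₀, α₁). -/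
open Set

private lemma deriv_char (a : ℝ) (ha : 0 < a) (u u' : ℝ → ℝ)
    (hd : ∀ x ∈ Icc 0 a, HasDerivAt u (u' x) x)
    (hd2 : ∀ x ∈ Icc 0 a, HasDerivAt u' (-1 : ℝ) x) :
    (∀ x ∈ Icc 0 a, u' x = u' 0 - x) ∧
      ∀ x ∈ Icc 0 a, u x = u 0 + u' 0 * x - x ^ 2 / 2 := by
  have hcont' : ContinuousOn u' (Icc 0 a) := fun x hx => (hd2 x hx).continuousAt.continuousWithinAt
  have hcont : ContinuousOn u (Icc 0 a) := fun x hx => (hd x hx).continuousAt.continuousWithinAt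
  have h1 : ∀ x ∈ Icc 0 a, u' x = u' 0 - x := by
    apply eq_of_has_deriv_right_eq (f' := fun _ => (-1 : ℝ))
    · exact fun x hx => (hd2 x (mem_Icc_of_Ico hx)).hasDerivWithinAt
    · intro x hx
      exact (((hasDerivAt_id x).const_sub (u' 0)).congr_deriv (by ring)).hasDerivWithinAt
    · exact hcont'
    · exact (continuous_const.sub continuous_id).continuousOn
    · simp
  refine ⟨h1, ?_⟩
  apply eq_of_has_deriv_right_eq (f' := u')
  · exact fun x hx => (hd x (mem_Icc_of_Ico hx)).hasDerivWithinAt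
  · intro x hx
    have : HasDerivAt (fun x : ℝ => u 0 + u' 0 * x - x ^ 2 / 2) (u' 0 - x) x := by
      have h2 : HasDerivAt (fun x : ℝ => x ^ 2 / 2) x x := by
        simpa using ((hasDerivAt_pow 2 x).div_const 2)
      exact ((((hasDerivAt_id x).const_mul (u' 0)).const_add (u 0)).sub h2).congr_deriv (by ring)
    rw [h1 x (mem_Icc_of_Ico hx)]
    exact this.hasDerivWithinAt
  · exact hcont
  · fun_prop
  · simp

private lemma integral_char (a : ℝ) (ha : 0 < a) (u u' : ℝ → ℝ)
    (hd : ∀ x ∈ Icc 0 a, HasDerivAt u (u' x) x)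
    (hd2 : ∀ x ∈ Icc 0 a, HasDerivAt u' (-1 : ℝ) x) :
    (∫ x in (0 : ℝ)..a, u x) = u 0 * a + u' 0 * a ^ 2 / 2 - a ^ 3 / 6 ∧
      u' a = u' 0 - a := by
  obtain ⟨h1, h2⟩ := deriv_char a ha u u' hd hd2
  constructor
  · have hcong : (∫ x in (0 : ℝ)..a, u x)
        = ∫ x in (0 : ℝ)..a, (u 0 + u' 0 * x - x ^ 2 / 2) := by
      apply intervalIntegral.integral_congr
      intro x hx
      rw [uIcc_of_le ha.le] at hx
      exact h2 x hx
    rw [hcong]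
    have hftc : (∫ x in (0:ℝ)..a, (u 0 + u' 0 * x - x ^ 2 / 2))
        = (fun t : ℝ => u 0 * t + u' 0 * t ^ 2 / 2 - t ^ 3 / 6) a
          - (fun t : ℝ => u 0 * t + u' 0 * t ^ 2 / 2 - t ^ 3 / 6) 0 := by
      apply intervalIntegral.integral_eq_sub_of_hasDerivAt
      · intro x _
        have hx2 : HasDerivAt (fun t : ℝ => u' 0 * t ^ 2 / 2) (u' 0 * x) x := by
          simpa [mul_comm, mul_assoc, mul_div_assoc] using
            (((hasDerivAt_pow 2 x).const_mul (u' 0)).div_const 2)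
        have hx3 : HasDerivAt (fun t : ℝ => t ^ 3 / 6) (x ^ 2 / 2) x := by
          have := (hasDerivAt_pow 3 x).div_const 6
          exact this.congr_deriv (by norm_num; ring)
        exact ((((hasDerivAt_id x).const_mul (u 0)).add hx2).sub hx3).congr_deriv (by ring)
      · exact (Continuous.intervalIntegrable (by continuity) 0 a)
    rw [hftc]
    ring
  · exact h1 a (right_mem_Icc.2 ha.le)

theorem stmt_19 (a α₀ α₁ α₀' : ℝ) (ha : 0 < a) (h₀ : 0 ≤ α₀) (h₁ : 0 ≤ α₁)
    (hnz : α₀ ≠ 0 ∨ α₁ ≠ 0) (hlt : α₀ < α₀') (υ υ' w w' : ℝ → ℝ)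
    (hυd : ∀ x ∈ Icc 0 a, HasDerivAt υ (υ' x) x)
    (hυd2 : ∀ x ∈ Icc 0 a, HasDerivAt υ' (-1) x)
    (hυbc0 : -υ' 0 + α₀ * υ 0 = 0)
    (hυbc1 : υ' a + α₁ * υ a = 0)
    (hwd : ∀ x ∈ Icc 0 a, HasDerivAt w (w' x) x)
    (hwd2 : ∀ x ∈ Icc 0 a, HasDerivAt w' (-1) x)
    (hwbc0 : -w' 0 + α₀' * w 0 = 0)
    (hwbc1 : w' a + α₁ * w a = 0) :
    (∫ x in (0 : ℝ)..a, w x) < ∫ x in (0 : ℝ)..a, υ x := by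
  obtain ⟨hIυ, hυa⟩ := integral_char a ha υ υ' hυd hυd2
  obtain ⟨hIw, hwa⟩ := integral_char a ha w w' hwd hwd2
  obtain ⟨_, hυval⟩ := deriv_char a ha υ υ' hυd hυd2
  obtain ⟨_, hwval⟩ := deriv_char a ha w w' hwd hwd2
  have hυa' : υ a = υ 0 + υ' 0 * a - a ^ 2 / 2 := hυval a (right_mem_Icc.2 ha.le)
  have hwa' : w a = w 0 + w' 0 * a - a ^ 2 / 2 := hwval a (right_mem_Icc.2 ha.le)
  set c := υ 0 with hc
  set c' := w 0 with hc'
  have hb : υ' 0 = α₀ * c := by linarith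
  have hb' : w' 0 = α₀' * c' := by linarith
  -- boundary at a gives c * D = N
  have hD : (0:ℝ) < α₀ + α₁ + α₀ * α₁ * a := by
    rcases hnz with h | h
    · have : 0 < α₀ := lt_of_le_of_ne h₀ (Ne.symm h)
      positivity
    · have : 0 < α₁ := lt_of_le_of_ne h₁ (Ne.symm h)
      positivity
  have h₀' : 0 ≤ α₀' := le_of_lt (lt_of_le_of_lt h₀ hlt)
  have hD' : (0:ℝ) < α₀' + α₁ + α₀' * α₁ * a := by
    have : 0 < α₀' := lt_of_le_of_lt h₀ hlt
    positivity
  have hN : (0:ℝ) < a + α₁ * a ^ 2 / 2 := by positivity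
  have hcD : c * (α₀ + α₁ + α₀ * α₁ * a) = a + α₁ * a ^ 2 / 2 := by
    have := hυbc1
    rw [hυa', hυa, hb] at this
    ring_nf
    ring_nf at this
    linarith
  have hcD' : c' * (α₀' + α₁ + α₀' * α₁ * a) = a + α₁ * a ^ 2 / 2 := by
    have := hwbc1
    rw [hwa', hwa, hb'] at this
    ring_nf
    ring_nf at this
    linarith
  rw [hIυ, hIw, hb, hb']
  have key : c' * a + α₀' * c' * a ^ 2 / 2 < c * a + α₀ * c * a ^ 2 / 2 := by
    have hceq : c = (a + α₁ * a ^ 2 / 2) / (α₀ + α₁ + α₀ * α₁ * a) :=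
      (eq_div_iff hD.ne').2 hcD
    have hceq' : c' = (a + α₁ * a ^ 2 / 2) / (α₀' + α₁ + α₀' * α₁ * a) :=
      (eq_div_iff hD'.ne').2 hcD'
    have hdiff : c * a + α₀ * c * a ^ 2 / 2 - (c' * a + α₀' * c' * a ^ 2 / 2)
        = a * (a + α₁ * a ^ 2 / 2) * (α₀' - α₀) * (2 + α₁ * a)
          / (2 * ((α₀ + α₁ + α₀ * α₁ * a) * (α₀' + α₁ + α₀' * α₁ * a))) := by
      rw [hceq, hceq']
      have := hD.ne'
      have := hD'.ne'
      generalize hX : α₀ + α₁ + α₀ * α₁ * a = X at *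
      generalize hX' : α₀' + α₁ + α₀' * α₁ * a = X' at *
      field_simp
      subst hX hX'
      ring
    have hpos : 0 < a * (a + α₁ * a ^ 2 / 2) * (α₀' - α₀) * (2 + α₁ * a)
        / (2 * ((α₀ + α₁ + α₀ * α₁ * a) * (α₀' + α₁ + α₀' * α₁ * a))) := by
      have h2 : (0:ℝ) < 2 + α₁ * a := by positivity
      have hsub : (0:ℝ) < α₀' - α₀ := sub_pos.2 hlt
      positivity
    linarith [hdiff ▸ hpos]
  linarith
end
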